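/- arXiv:1806.07249 — 4 statements merged into one kernel-verified Lean document; each statement's English description precedes it below -/
import Mathlib

section
/- For any x ≥ −1, (1+x)·log(1+x) − x ≥ (1/2)·x²/(1 + x/3), with equality iff x = 0 (interpreting the left side as 1 at x = −1, i.e. 0·log 0 = 0). -/
open Real

noncomputable def gFun : ℝ → ℝ := fun x => (1 + x) * Real.log (1 + x) - x - (1/2) * x^2 / (1 + x/3)

noncomputable def hFun : ℝ → ℝ := fun x => Real.log (1 + x) - 3*x*(x+6) / (2*(x+3)^2)

lemma den_pos {x : ℝ} (hx : -1 ≤ x) : (0:ℝ) < 1 + x/3 := by linarith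

lemma hasDerivAt_g {x : ℝ} (hx : -1 < x) : HasDerivAt gFun (hFun x) x := by
  have h1 : (0:ℝ) < 1 + x := by linarith
  have h3 : (0:ℝ) < 1 + x/3 := by linarith
  have l1 : HasDerivAt (fun y : ℝ => 1 + y) 1 x := by
    simpa using (hasDerivAt_id x).const_add 1
  have l2 : HasDerivAt (fun y : ℝ => Real.log (1 + y)) ((1+x)⁻¹ * 1) x :=
    (Real.hasDerivAt_log h1.ne').comp x l1
  have l3 : HasDerivAt (fun y : ℝ => (1 + y) * Real.log (1 + y))
      (1 * Real.log (1+x) + (1+x) * ((1+x)⁻¹ * 1)) x := l1.mul l2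
  have l4 : HasDerivAt (fun y : ℝ => (1/2) * y^2) ((1/2) * (2 * x^1)) x :=
    (hasDerivAt_pow 2 x).const_mul (1/2)
  have l5 : HasDerivAt (fun y : ℝ => 1 + y/3) (1/3) x := by
    simpa using ((hasDerivAt_id x).div_const 3).const_add 1
  have l6 := l4.div l5 h3.ne'
  have l7 := (l3.sub (hasDerivAt_id x)).sub l6
  convert (show HasDerivAt gFun _ x from l7) using 1
  have hx3 : (x:ℝ) + 3 ≠ 0 := by linarith
  simp only [hFun, id]
  have e1 : (1+x) * ((1+x)⁻¹ * 1) = 1 := by field_simp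
  rw [e1]
  have e2 : (1 / 2 * (2 * x ^ 1) * (1 + x / 3) - 1 / 2 * x ^ 2 * (1 / 3)) / (1 + x / 3) ^ 2
      = 3*x*(x+6) / (2*(x+3)^2) := by
    rw [div_eq_div_iff (pow_ne_zero 2 h3.ne') (by positivity)]
    ring
  rw [e2]
  ring

lemma hasDerivAt_h {x : ℝ} (hx : -1 < x) :
    HasDerivAt hFun (x^2 * (x+9) / ((1+x) * (x+3)^3)) x := by
  have h1 : (0:ℝ) < 1 + x := by linarith
  have h3 : (0:ℝ) < x + 3 := by linarith
  have l1 : HasDerivAt (fun y : ℝ => 1 + y) 1 x := by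
    simpa using (hasDerivAt_id x).const_add 1
  have l2 : HasDerivAt (fun y : ℝ => Real.log (1 + y)) ((1+x)⁻¹ * 1) x :=
    (Real.hasDerivAt_log h1.ne').comp x l1
  have ln : HasDerivAt (fun y : ℝ => 3*y*(y+6)) ((3*1) * (x+6) + (3*x) * 1) x := by
    have := ((hasDerivAt_id x).const_mul 3).mul ((hasDerivAt_id x).add_const 6)
    exact this
  have ld0 : HasDerivAt (fun y : ℝ => (y+3)^2) (2 * (x+3)^1 * 1) x :=
    ((hasDerivAt_id x).add_const 3).pow 2
  have ld : HasDerivAt (fun y : ℝ => 2*(y+3)^2) (2 * (2 * (x+3)^1 * 1)) x :=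
    ld0.const_mul 2
  have hden : (2*(x+3)^2 : ℝ) ≠ 0 := by positivity
  have lq := ln.div ld hden
  have l7 := l2.sub lq
  convert (show HasDerivAt hFun _ x from l7) using 1
  have hx3 : (x:ℝ) + 3 ≠ 0 := h3.ne'
  field_simp
  ring

lemma h_continuousOn : ContinuousOn hFun (Set.Ioi (-1 : ℝ)) := fun x hx =>
  ((hasDerivAt_h hx).continuousAt).continuousWithinAt

lemma h_neg {x : ℝ} (hx : -1 < x) (hx0 : x < 0) : hFun x < 0 := by
  have h0 : hFun 0 = 0 := by simp [hFun]
  have hmono : StrictMonoOn hFun (Set.Icc x 0) := by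
    apply strictMonoOn_of_deriv_pos (convex_Icc _ _)
    · intro y hy
      exact ((hasDerivAt_h (lt_of_lt_of_le hx hy.1)).continuousAt).continuousWithinAt
    · intro y hy
      rw [interior_Icc] at hy
      have hy1 : -1 < y := lt_trans hx hy.1
      rw [(hasDerivAt_h hy1).deriv]
      have hyne : y ≠ 0 := ne_of_lt hy.2
      have h2 : (0:ℝ) < y^2 := by positivity
      have h4 : (0:ℝ) < 1 + y := by linarith
      have h5 : (0:ℝ) < y + 3 := by linarith
      exact div_pos (mul_pos h2 (by linarith)) (mul_pos h4 (pow_pos h5 3))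
  have := hmono (Set.left_mem_Icc.2 hx0.le) (Set.right_mem_Icc.2 hx0.le) hx0
  linarith [h0 ▸ this]

lemma h_pos {x : ℝ} (hx0 : 0 < x) : 0 < hFun x := by
  have h0 : hFun 0 = 0 := by simp [hFun]
  have hmono : StrictMonoOn hFun (Set.Icc 0 x) := by
    apply strictMonoOn_of_deriv_pos (convex_Icc _ _)
    · intro y hy
      have : (-1:ℝ) < y := by linarith [hy.1]
      exact ((hasDerivAt_h this).continuousAt).continuousWithinAt
    · intro y hy
      rw [interior_Icc] at hy
      have hy1 : -1 < y := by linarith [hy.1]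
      rw [(hasDerivAt_h hy1).deriv]
      have hyne : y ≠ 0 := ne_of_gt hy.1
      have h2 : (0:ℝ) < y^2 := by positivity
      have h4 : (0:ℝ) < 1 + y := by linarith
      have h5 : (0:ℝ) < y + 3 := by linarith
      exact div_pos (mul_pos h2 (by linarith)) (mul_pos h4 (pow_pos h5 3))
  have := hmono (Set.left_mem_Icc.2 hx0.le) (Set.right_mem_Icc.2 hx0.le) hx0
  linarith [h0 ▸ this]

lemma g_zero : gFun 0 = 0 := by simp [gFun]

lemma g_pos {x : ℝ} (hx : -1 ≤ x) (hx0 : x ≠ 0) : 0 < gFun x := by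
  rcases eq_or_lt_of_le hx with heq | hlt
  · -- x = -1
    rw [← heq]
    norm_num [gFun]
  rcases lt_trichotomy x 0 with h | h | h
  · -- g strictly anti on [x,0]
    have hanti : StrictAntiOn gFun (Set.Icc x 0) := by
      apply strictAntiOn_of_deriv_neg (convex_Icc _ _)
      · intro y hy
        exact ((hasDerivAt_g (lt_of_lt_of_le hlt hy.1)).continuousAt).continuousWithinAt
      · intro y hy
        rw [interior_Icc] at hy
        rw [(hasDerivAt_g (lt_of_lt_of_le hlt hy.1.le)).deriv]
        exact h_neg (lt_trans hlt hy.1) hy.2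
    have := hanti (Set.left_mem_Icc.2 h.le) (Set.right_mem_Icc.2 h.le) h
    rw [g_zero] at this; linarith
  · exact absurd h hx0
  · have hmono : StrictMonoOn gFun (Set.Icc 0 x) := by
      apply strictMonoOn_of_deriv_pos (convex_Icc _ _)
      · intro y hy
        have : (-1:ℝ) < y := by linarith [hy.1]
        exact ((hasDerivAt_g this).continuousAt).continuousWithinAt
      · intro y hy
        rw [interior_Icc] at hy
        have hy1 : (-1:ℝ) < y := by linarith [hy.1]
        rw [(hasDerivAt_g hy1).deriv]
        exact h_pos hy.1
    have := hmono (Set.left_mem_Icc.2 h.le) (Set.right_mem_Icc.2 h.le) h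
    rw [g_zero] at this; linarith

/-- Elementary inequality: for `x ≥ -1`,
`(1+x)·log(1+x) − x ≥ (1/2)·x²/(1 + x/3)`, with equality iff `x = 0`.
(At `x = -1` the left-hand side is `1`, since `Real.log 0 = 0`.) -/
theorem elementary_log_ineq (x : ℝ) (hx : -1 ≤ x) :
    (1 / 2) * x ^ 2 / (1 + x / 3) ≤ (1 + x) * Real.log (1 + x) - x ∧
    ((1 + x) * Real.log (1 + x) - x = (1 / 2) * x ^ 2 / (1 + x / 3) ↔ x = 0) := by
  by_cases hx0 : x = 0
  · subst hx0
    norm_num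
  · have hg := g_pos hx hx0
    unfold gFun at hg
    constructor
    · linarith
    · constructor
      · intro he; exfalso; rw [he] at hg; linarith
      · intro he; exact absurd he hx0
end

section
/- Superadditivity of relative entropy for product second argument: let P be a probability measure on Ω_l × Ω_r with marginals P_l and P_r, and let Q = Q_l ⊗ Q_r be a product probability measure. Then S(P_l|Q_l) + S(P_r|Q_r) ≤ S(P|Q). If S(P|Q) < ∞, equality holds iff P = P_l ⊗ P_r. -/
open scoped BigOperators

open Classical in
/-- Relative entropy `S(P|Q)` of two probability measures on a finite set,
with value `∞` when `P` is not absolutely continuous w.r.t. `Q`. -/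
noncomputable def relEnt {Ω : Type*} [Fintype Ω] (P Q : Ω → ℝ) : EReal :=
  if ∀ ω, Q ω = 0 → P ω = 0 then
    (((∑ ω, if P ω = 0 then 0 else P ω * Real.log (P ω / Q ω)) : ℝ) : EReal)
  else ⊤

open Classical in
lemma relEnt_of_ac {Ω : Type*} [Fintype Ω] (P Q : Ω → ℝ) (h : ∀ ω, Q ω = 0 → P ω = 0) :
    relEnt P Q
      = (((∑ ω, if P ω = 0 then 0 else P ω * Real.log (P ω / Q ω)) : ℝ) : EReal) := by
  unfold relEnt; rw [if_pos h]

open Classical in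
lemma relEnt_of_not_ac {Ω : Type*} [Fintype Ω] (P Q : Ω → ℝ)
    (h : ¬ ∀ ω, Q ω = 0 → P ω = 0) : relEnt P Q = ⊤ := by
  unfold relEnt; rw [if_neg h]

lemma gibbs_le (p q : ℝ) (hp : 0 ≤ p) (hq : 0 ≤ q) (h : q = 0 → p = 0) :
    p - q ≤ (if p = 0 then 0 else p * Real.log (p / q)) := by
  by_cases hp0 : p = 0
  · simp [hp0]; linarith
  · rw [if_neg hp0]
    have hpp : 0 < p := lt_of_le_of_ne hp (Ne.symm hp0)
    have hq0 : q ≠ 0 := fun hh => hp0 (h hh)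
    have hqq : 0 < q := lt_of_le_of_ne hq (Ne.symm hq0)
    have hlog : Real.log (q / p) ≤ q / p - 1 :=
      Real.log_le_sub_one_of_pos (div_pos hqq hpp)
    have hrev : Real.log (p / q) = - Real.log (q / p) := by
      rw [← Real.log_inv, inv_div]
    have hdiv : p * (q / p) = q := by field_simp
    rw [hrev]
    nlinarith [mul_le_mul_of_nonneg_left hlog hp]

lemma gibbs_eq (p q : ℝ) (hp : 0 ≤ p) (hq : 0 ≤ q) (h : q = 0 → p = 0) :
    ((if p = 0 then 0 else p * Real.log (p / q)) = p - q) ↔ p = q := by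
  constructor
  · intro heq
    by_cases hp0 : p = 0
    · rw [if_pos hp0] at heq
      rw [hp0] at heq ⊢
      linarith
    · rw [if_neg hp0] at heq
      have hpp : 0 < p := lt_of_le_of_ne hp (Ne.symm hp0)
      have hq0 : q ≠ 0 := fun hh => hp0 (h hh)
      have hqq : 0 < q := lt_of_le_of_ne hq (Ne.symm hq0)
      by_contra hne
      have hqp1 : q / p ≠ 1 := by
        intro hh
        exact hne ((div_eq_one_iff_eq (ne_of_gt hpp)).mp hh).symm
      have hlog : Real.log (q / p) < q / p - 1 :=
        Real.log_lt_sub_one_of_pos (div_pos hqq hpp) hqp1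
      have hrev : Real.log (p / q) = - Real.log (q / p) := by
        rw [← Real.log_inv, inv_div]
      have hdiv : p * (q / p) = q := by field_simp
      rw [hrev] at heq
      nlinarith [mul_lt_mul_of_pos_left hlog hpp]
  · intro heq
    subst heq
    by_cases hp0 : p = 0
    · simp [hp0]
    · rw [if_neg hp0, div_self hp0, Real.log_one]
      ring

/-- Superadditivity of relative entropy when the second argument is a product:
`S(P_l|Q_l) + S(P_r|Q_r) ≤ S(P|Q_l⊗Q_r)`, with equality (when `S(P|Q) < ∞`)
iff `P = P_l ⊗ P_r`. -/
theorem relEnt_superadditive {Ωl Ωr : Type*} [Fintype Ωl] [Fintype Ωr]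
    (P : Ωl × Ωr → ℝ) (Ql : Ωl → ℝ) (Qr : Ωr → ℝ)
    (hP0 : ∀ ω, 0 ≤ P ω) (hQl0 : ∀ ω, 0 ≤ Ql ω) (hQr0 : ∀ ω, 0 ≤ Qr ω)
    (hP1 : ∑ ω, P ω = 1) (hQl1 : ∑ ω, Ql ω = 1) (hQr1 : ∑ ω, Qr ω = 1) :
    relEnt (fun a => ∑ b, P (a, b)) Ql + relEnt (fun b => ∑ a, P (a, b)) Qr
      ≤ relEnt P (fun ω => Ql ω.1 * Qr ω.2) ∧
    (relEnt P (fun ω => Ql ω.1 * Qr ω.2) < ⊤ →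
      (relEnt (fun a => ∑ b, P (a, b)) Ql + relEnt (fun b => ∑ a, P (a, b)) Qr
          = relEnt P (fun ω => Ql ω.1 * Qr ω.2)
        ↔ ∀ a b, P (a, b) = (∑ b', P (a, b')) * (∑ a', P (a', b)))) := by
  classical
  set Pl : Ωl → ℝ := fun a => ∑ b, P (a, b) with hPldef
  set Pr : Ωr → ℝ := fun b => ∑ a, P (a, b) with hPrdef
  by_cases hac : ∀ ω : Ωl × Ωr, (fun ω : Ωl × Ωr => Ql ω.1 * Qr ω.2) ω = 0 → P ω = 0
  · -- absolute continuity case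
    have hPl0 : ∀ a, 0 ≤ Pl a := fun a => Finset.sum_nonneg fun b _ => hP0 (a, b)
    have hPr0 : ∀ b, 0 ≤ Pr b := fun b => Finset.sum_nonneg fun a _ => hP0 (a, b)
    have hacl : ∀ a, Ql a = 0 → Pl a = 0 := by
      intro a ha
      exact Finset.sum_eq_zero fun b _ => hac (a, b) (by simp [ha])
    have hacr : ∀ b, Qr b = 0 → Pr b = 0 := by
      intro b hb
      exact Finset.sum_eq_zero fun a _ => hac (a, b) (by simp [hb])
    -- P(a,b) ≤ Pl a and P(a,b) ≤ Pr b
    have hlePl : ∀ a b, P (a, b) ≤ Pl a := fun a b =>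
      Finset.single_le_sum (fun b' _ => hP0 (a, b')) (Finset.mem_univ b)
    have hlePr : ∀ a b, P (a, b) ≤ Pr b := fun a b =>
      Finset.single_le_sum (fun a' _ => hP0 (a', b)) (Finset.mem_univ a)
    have hacM : ∀ ω : Ωl × Ωr, Pl ω.1 * Pr ω.2 = 0 → P ω = 0 := by
      rintro ⟨a, b⟩ hab
      rcases mul_eq_zero.mp hab with h | h
      · exact le_antisymm (h ▸ hlePl a b) (hP0 (a, b))
      · exact le_antisymm (h ▸ hlePr a b) (hP0 (a, b))
    set L : ℝ := ∑ a, if Pl a = 0 then 0 else Pl a * Real.log (Pl a / Ql a) with hLdef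
    set R : ℝ := ∑ b, if Pr b = 0 then 0 else Pr b * Real.log (Pr b / Qr b) with hRdef
    set T : ℝ := ∑ ω : Ωl × Ωr,
      if P ω = 0 then 0 else P ω * Real.log (P ω / (Ql ω.1 * Qr ω.2)) with hTdef
    set M : ℝ := ∑ ω : Ωl × Ωr,
      if P ω = 0 then 0 else P ω * Real.log (P ω / (Pl ω.1 * Pr ω.2)) with hMdef
    -- L as a double sum
    have hLsum : L = ∑ ω : Ωl × Ωr,
        (if P ω = 0 then 0 else P ω * Real.log (Pl ω.1 / Ql ω.1)) := by
      rw [Fintype.sum_prod_type, hLdef]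
      apply Finset.sum_congr rfl
      intro a _
      have h1 : ∑ b, (if P (a, b) = 0 then 0 else P (a, b) * Real.log (Pl a / Ql a))
          = Pl a * Real.log (Pl a / Ql a) := by
        rw [hPldef, Finset.sum_mul]
        apply Finset.sum_congr rfl
        intro b _
        by_cases h : P (a, b) = 0 <;> simp [h]
      rw [h1]
      by_cases h : Pl a = 0 <;> simp [h]
    have hRsum : R = ∑ ω : Ωl × Ωr,
        (if P ω = 0 then 0 else P ω * Real.log (Pr ω.2 / Qr ω.2)) := by
      rw [Fintype.sum_prod_type_right, hRdef]
      apply Finset.sum_congr rfl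
      intro b _
      have h1 : ∑ a, (if P (a, b) = 0 then 0 else P (a, b) * Real.log (Pr b / Qr b))
          = Pr b * Real.log (Pr b / Qr b) := by
        rw [hPrdef, Finset.sum_mul]
        apply Finset.sum_congr rfl
        intro a _
        by_cases h : P (a, b) = 0 <;> simp [h]
      rw [h1]
      by_cases h : Pr b = 0 <;> simp [h]
    -- key pointwise identity
    have hkey : T = L + R + M := by
      rw [hLsum, hRsum, hMdef, hTdef, ← Finset.sum_add_distrib, ← Finset.sum_add_distrib]
      apply Finset.sum_congr rfl
      rintro ⟨a, b⟩ _
      by_cases h : P (a, b) = 0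
      · simp [h]
      · simp only [if_neg h]
        have hp : 0 < P (a, b) := lt_of_le_of_ne (hP0 (a, b)) (Ne.symm h)
        have hql : Ql a ≠ 0 := by
          intro hh
          exact h (hac (a, b) (by simp [hh]))
        have hqr : Qr b ≠ 0 := by
          intro hh
          exact h (hac (a, b) (by simp [hh]))
        have hpl : Pl a ≠ 0 := ne_of_gt (lt_of_lt_of_le hp (hlePl a b))
        have hpr : Pr b ≠ 0 := ne_of_gt (lt_of_lt_of_le hp (hlePr a b))
        have hlog : Real.log (P (a, b) / (Ql a * Qr b))
            = Real.log (Pl a / Ql a) + Real.log (Pr b / Qr b)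
              + Real.log (P (a, b) / (Pl a * Pr b)) := by
          rw [Real.log_div h (mul_ne_zero hql hqr),
              Real.log_div hpl hql, Real.log_div hpr hqr,
              Real.log_div h (mul_ne_zero hpl hpr),
              Real.log_mul hql hqr, Real.log_mul hpl hpr]
          ring
        rw [hlog]; ring
    -- M is nonneg and vanishes iff product
    have hsumq : ∑ ω : Ωl × Ωr, Pl ω.1 * Pr ω.2 = 1 := by
      have h1 : ∑ a, Pl a = 1 := by rw [hPldef, ← Fintype.sum_prod_type, hP1]
      have h2 : ∑ b, Pr b = 1 := by rw [hPrdef, ← Fintype.sum_prod_type_right, hP1]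
      rw [Fintype.sum_prod_type]
      calc ∑ a, ∑ b, Pl a * Pr b = (∑ a, Pl a) * ∑ b, Pr b := by
            rw [Finset.sum_mul_sum]
        _ = 1 := by rw [h1, h2, one_mul]
    have hdiffsum : ∑ ω : Ωl × Ωr, (P ω - Pl ω.1 * Pr ω.2) = 0 := by
      rw [Finset.sum_sub_distrib, hP1, hsumq]; ring
    have hterm_le : ∀ ω : Ωl × Ωr, P ω - Pl ω.1 * Pr ω.2
        ≤ (if P ω = 0 then 0 else P ω * Real.log (P ω / (Pl ω.1 * Pr ω.2))) :=
      fun ω => gibbs_le _ _ (hP0 ω) (mul_nonneg (hPl0 ω.1) (hPr0 ω.2)) (hacM ω)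
    have hM0 : 0 ≤ M := by
      rw [hMdef]
      calc (0 : ℝ) = ∑ ω : Ωl × Ωr, (P ω - Pl ω.1 * Pr ω.2) := hdiffsum.symm
        _ ≤ _ := Finset.sum_le_sum fun ω _ => hterm_le ω
    have hMiff : M = 0 ↔ ∀ a b, P (a, b) = Pl a * Pr b := by
      have hsplit : M = ∑ ω : Ωl × Ωr,
          ((if P ω = 0 then 0 else P ω * Real.log (P ω / (Pl ω.1 * Pr ω.2)))
            - (P ω - Pl ω.1 * Pr ω.2)) := by
        rw [Finset.sum_sub_distrib, hdiffsum, sub_zero, hMdef]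
      rw [hsplit]
      rw [Finset.sum_eq_zero_iff_of_nonneg (fun ω _ => sub_nonneg.mpr (hterm_le ω))]
      constructor
      · intro hall a b
        have := hall (a, b) (Finset.mem_univ _)
        have h2 := (gibbs_eq (P (a, b)) (Pl a * Pr b) (hP0 (a, b))
          (mul_nonneg (hPl0 a) (hPr0 b)) (hacM (a, b))).mp (by linarith [sub_eq_zero.mp this])
        exact h2
      · intro hall ω _
        have h2 := (gibbs_eq (P ω) (Pl ω.1 * Pr ω.2) (hP0 ω)
          (mul_nonneg (hPl0 ω.1) (hPr0 ω.2)) (hacM ω)).mpr (hall ω.1 ω.2)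
        rw [h2]; ring
    -- rewrite relEnts
    have e1 : relEnt Pl Ql = (L : EReal) := relEnt_of_ac Pl Ql hacl
    have e2 : relEnt Pr Qr = (R : EReal) := relEnt_of_ac Pr Qr hacr
    have e3 : relEnt P (fun ω => Ql ω.1 * Qr ω.2) = (T : EReal) :=
      relEnt_of_ac P _ hac
    rw [e1, e2, e3]
    constructor
    · rw [← EReal.coe_add, EReal.coe_le_coe_iff, hkey]
      linarith
    · intro _
      rw [← EReal.coe_add, EReal.coe_eq_coe_iff, hkey]
      constructor
      · intro hh
        have : M = 0 := by linarith
        exact hMiff.mp this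
      · intro hh
        have : M = 0 := hMiff.mpr hh
        linarith
  · -- non absolutely continuous: RHS = ⊤
    have e3 : relEnt P (fun ω => Ql ω.1 * Qr ω.2) = ⊤ := relEnt_of_not_ac P _ hac
    rw [e3]
    exact ⟨le_top, fun h => absurd h (lt_irrefl ⊤)⟩
end

section
/- Rate function at extreme values: with C(α) = log E(e^{αX}) and I(θ) = sup_α(αθ − C(α)) for X not constant on supp P, let M = max_ω X(ω) and S_M = {ω : X(ω) = M}. Then I(M) = lim_{θ ↑ M} I(θ) = −log P(S_M), and I(θ) = ∞ for θ > M. -/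
open Filter Topology

lemma aux_sup_coe {g : ℝ → ℝ} {L : ℝ} (hle : ∀ a, g a ≤ L)
    (h : Tendsto g atTop (nhds L)) : (⨆ a : ℝ, ((g a : ℝ) : EReal)) = (L : EReal) := by
  refine le_antisymm (iSup_le fun a => EReal.coe_le_coe_iff.2 (hle a)) ?_
  have h2 : Tendsto (fun a => ((g a : ℝ) : EReal)) atTop (nhds (L : EReal)) :=
    EReal.tendsto_coe.2 h
  calc (L : EReal) = limsup (fun a => ((g a : ℝ) : EReal)) atTop := h2.limsup_eq.symm
    _ ≤ ⨆ a : ℝ, ((g a : ℝ) : EReal) := limsup_le_iSup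

lemma aux_sup_top {g : ℝ → ℝ} (h : Tendsto g atTop atTop) :
    (⨆ a : ℝ, ((g a : ℝ) : EReal)) = ⊤ := by
  refine top_unique ?_
  have h2 : Tendsto (fun a => ((g a : ℝ) : EReal)) atTop (nhds (⊤ : EReal)) := by
    rw [EReal.tendsto_nhds_top_iff_real]
    intro x
    filter_upwards [h.eventually_gt_atTop x] with a ha using EReal.coe_lt_coe_iff.2 ha
  calc (⊤ : EReal) = limsup (fun a => ((g a : ℝ) : EReal)) atTop := h2.limsup_eq.symm
    _ ≤ _ := limsup_le_iSup

open scoped BigOperators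
open Classical in
/-- Rate function at the maximal value: with `M` the maximum of `X` on the
support of `P` and `S_M = {ω : X ω = M}`, the rate function
`I(θ) = sup_α (αθ − C(α))` satisfies `I(M) = lim_{θ↑M} I(θ) = −log P(S_M)`,
and `I(θ) = ∞` for `θ > M`. -/
theorem rate_function_at_max {Ω : Type*} [Fintype Ω] (P : Ω → ℝ) (X : Ω → ℝ)
    (hP0 : ∀ ω, 0 ≤ P ω) (hP1 : ∑ ω, P ω = 1)
    (hX : ∃ ω₁ ω₂, P ω₁ ≠ 0 ∧ P ω₂ ≠ 0 ∧ X ω₁ ≠ X ω₂)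
    (M : ℝ) (hMmem : ∃ ω, P ω ≠ 0 ∧ X ω = M) (hMmax : ∀ ω, P ω ≠ 0 → X ω ≤ M) :
    (⨆ α : ℝ, ((α * M - Real.log (∑ ω, Real.exp (α * X ω) * P ω) : ℝ) : EReal))
        = ((-Real.log (∑ ω, if X ω = M then P ω else 0) : ℝ) : EReal) ∧
    Filter.Tendsto (fun θ : ℝ =>
        ⨆ α : ℝ, ((α * θ - Real.log (∑ ω, Real.exp (α * X ω) * P ω) : ℝ) : EReal))
      (nhdsWithin M (Set.Iio M))
      (nhds ((-Real.log (∑ ω, if X ω = M then P ω else 0) : ℝ) : EReal)) ∧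
    ∀ θ : ℝ, M < θ →
      (⨆ α : ℝ, ((α * θ - Real.log (∑ ω, Real.exp (α * X ω) * P ω) : ℝ) : EReal)) = ⊤ := by
  classical
  obtain ⟨ωM, hωM, hXωM⟩ := hMmem
  set p : ℝ := ∑ ω, if X ω = M then P ω else 0 with hp_def
  have hp : 0 < p := by
    have h1 : P ωM ≤ p := by
      have := Finset.single_le_sum (f := fun ω => if X ω = M then P ω else 0)
        (fun ω _ => by split <;> simp [hP0 ω]) (Finset.mem_univ ωM)
      simpa [hXωM] using this
    exact lt_of_lt_of_le ((hP0 ωM).lt_of_ne (Ne.symm hωM)) h1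
  set f : ℝ → ℝ := fun α => ∑ ω, Real.exp (α * (X ω - M)) * P ω with hf_def
  have hfp : ∀ α, p ≤ f α := by
    intro α
    refine Finset.sum_le_sum fun ω _ => ?_
    split
    · rename_i h
      rw [h, sub_self, mul_zero, Real.exp_zero, one_mul]
    · exact mul_nonneg (Real.exp_pos _).le (hP0 ω)
  have hfpos : ∀ α, 0 < f α := fun α => hp.trans_le (hfp α)
  have hZlog : ∀ α : ℝ, Real.log (∑ ω, Real.exp (α * X ω) * P ω)
      = α * M + Real.log (f α) := by
    intro α
    have hsum : (∑ ω, Real.exp (α * X ω) * P ω) = Real.exp (α * M) * f α := by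
      rw [hf_def, Finset.mul_sum]
      refine Finset.sum_congr rfl fun ω _ => ?_
      rw [← mul_assoc, ← Real.exp_add]
      ring_nf
    rw [hsum, Real.log_mul (Real.exp_ne_zero _) (hfpos α).ne', Real.log_exp]
  have hf1 : ∀ α : ℝ, 0 ≤ α → f α ≤ 1 := by
    intro α hα
    calc f α ≤ ∑ ω, P ω := by
          refine Finset.sum_le_sum fun ω _ => ?_
          by_cases hω : P ω = 0
          · simp [hω]
          · have hXle := hMmax ω hω
            have h1 : Real.exp (α * (X ω - M)) ≤ 1 := by
              rw [Real.exp_le_one_iff]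
              exact mul_nonpos_of_nonneg_of_nonpos hα (by linarith)
            exact mul_le_of_le_one_left (hP0 ω) h1
      _ = 1 := hP1
  have htendsto : Tendsto f atTop (nhds p) := by
    rw [hf_def, hp_def]
    refine tendsto_finset_sum _ fun ω _ => ?_
    by_cases hXM : X ω = M
    · simp only [hXM, sub_self, mul_zero, Real.exp_zero, one_mul, if_pos]
      exact tendsto_const_nhds
    · simp only [hXM, if_false]
      by_cases hω : P ω = 0
      · simp only [hω, mul_zero]
        exact tendsto_const_nhds
      · have hlt : X ω - M < 0 := sub_neg.2 (lt_of_le_of_ne (hMmax ω hω) hXM)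
        have h1 : Tendsto (fun α : ℝ => α * (X ω - M)) atTop atBot :=
          tendsto_id.atTop_mul_const_of_neg hlt
        have h2 := (Real.tendsto_exp_atBot.comp h1).mul_const (P ω)
        simpa using h2
  have h_nlog : Tendsto (fun α => -Real.log (f α)) atTop (nhds (-Real.log p)) :=
    ((Real.continuousAt_log hp.ne').tendsto.comp htendsto).neg
  have h_nlog_le : ∀ α, -Real.log (f α) ≤ -Real.log p :=
    fun α => neg_le_neg (Real.log_le_log hp (hfp α))
  -- Part 1
  have key1 : (⨆ α : ℝ, ((α * M - Real.log (∑ ω, Real.exp (α * X ω) * P ω) : ℝ) : EReal))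
      = ((-Real.log p : ℝ) : EReal) := by
    have hrw : ∀ α : ℝ, α * M - Real.log (∑ ω, Real.exp (α * X ω) * P ω)
        = -Real.log (f α) := fun α => by rw [hZlog α]; ring
    calc (⨆ α : ℝ, ((α * M - Real.log (∑ ω, Real.exp (α * X ω) * P ω) : ℝ) : EReal))
        = ⨆ α : ℝ, ((-Real.log (f α) : ℝ) : EReal) := iSup_congr fun α => by rw [hrw α]
      _ = _ := aux_sup_coe h_nlog_le h_nlog
  -- Part 3
  have key3 : ∀ θ : ℝ, M < θ →
      (⨆ α : ℝ, ((α * θ - Real.log (∑ ω, Real.exp (α * X ω) * P ω) : ℝ) : EReal)) = ⊤ := by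
    intro θ hθ
    have hrw : ∀ α : ℝ, α * θ - Real.log (∑ ω, Real.exp (α * X ω) * P ω)
        = α * (θ - M) - Real.log (f α) := fun α => by rw [hZlog α]; ring
    rw [show (⨆ α : ℝ, ((α * θ - Real.log (∑ ω, Real.exp (α * X ω) * P ω) : ℝ) : EReal))
        = ⨆ α : ℝ, ((α * (θ - M) - Real.log (f α) : ℝ) : EReal)
        from iSup_congr fun α => by rw [hrw α]]
    apply aux_sup_top
    refine tendsto_atTop_mono' atTop ?_ (tendsto_id.atTop_mul_const (sub_pos.2 hθ))
    filter_upwards [eventually_ge_atTop (0 : ℝ)] with α hα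
    have hle : Real.log (f α) ≤ 0 := Real.log_nonpos (hfpos α).le (hf1 α hα)
    simp only [id_eq]
    linarith
  -- Part 2 setup
  set I : ℝ → EReal := fun θ =>
    ⨆ α : ℝ, ((α * θ - Real.log (∑ ω, Real.exp (α * X ω) * P ω) : ℝ) : EReal) with hI_def
  have hIrw : ∀ θ : ℝ, I θ = ⨆ α : ℝ, ((α * (θ - M) - Real.log (f α) : ℝ) : EReal) := by
    intro θ
    exact iSup_congr fun α => by rw [show α * θ - Real.log (∑ ω, Real.exp (α * X ω) * P ω)
      = α * (θ - M) - Real.log (f α) from by rw [hZlog α]; ring]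
  obtain ⟨ω₀, hω₀, hm⟩ : ∃ ω, P ω ≠ 0 ∧ X ω < M := by
    obtain ⟨ω₁, ω₂, h1, h2, h12⟩ := hX
    rcases lt_or_ge (X ω₁) M with h | h
    · exact ⟨ω₁, h1, h⟩
    · have e1 : X ω₁ = M := le_antisymm (hMmax ω₁ h1) h
      exact ⟨ω₂, h2, lt_of_le_of_ne (hMmax ω₂ h2) (fun hc => h12 (by rw [e1, hc]))⟩
  set m : ℝ := X ω₀
  set q : ℝ := P ω₀
  have hq : 0 < q := (hP0 ω₀).lt_of_ne (Ne.symm hω₀)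
  have B1 : ∀ α θ : ℝ, α * (θ - M) - Real.log (f α) ≤ α * (θ - m) - Real.log q := by
    intro α θ
    have hfge : Real.exp (α * (m - M)) * q ≤ f α :=
      Finset.single_le_sum (f := fun ω => Real.exp (α * (X ω - M)) * P ω)
        (fun ω _ => mul_nonneg (Real.exp_pos _).le (hP0 ω)) (Finset.mem_univ ω₀)
    have hlog : α * (m - M) + Real.log q ≤ Real.log (f α) := by
      calc α * (m - M) + Real.log q = Real.log (Real.exp (α * (m - M)) * q) := by
            rw [Real.log_mul (Real.exp_ne_zero _) hq.ne', Real.log_exp]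
        _ ≤ _ := Real.log_le_log (by positivity) hfge
    linarith
  have B0 : ∀ α : ℝ, 0 ≤ α → ∀ θ : ℝ, θ ≤ M →
      α * (θ - M) - Real.log (f α) ≤ -Real.log p := by
    intro α hα θ hθ
    have h1 := h_nlog_le α
    nlinarith [mul_nonneg hα (sub_nonneg.2 hθ)]
  set L : ℝ := -Real.log p with hL_def
  -- upper eventual bound
  have hUB : ∀ ε : ℝ, 0 < ε →
      ∀ᶠ θ in nhdsWithin M (Set.Iio M), I θ ≤ ((L + ε : ℝ) : EReal) := by
    intro ε hε
    set c : ℝ := L + ε + Real.log q with hc_def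
    set d : ℝ := (M - m) / 2 with hd_def
    have hd : 0 < d := half_pos (sub_pos.2 hm)
    set A : ℝ := min (c / d) 0 with hA_def
    have hA0 : A ≤ 0 := min_le_right _ _
    have hA1 : 0 < 1 - A := by linarith
    set δ : ℝ := min (ε / (1 - A)) d with hδ_def
    have hδ : 0 < δ := lt_min (by positivity) hd
    filter_upwards [eventually_nhdsWithin_of_eventually_nhds
      (eventually_gt_nhds (show M - δ < M by linarith)), eventually_mem_nhdsWithin]
      with θ hθ1 hθ2
    have hθM : θ < M := hθ2
    have hMd : M - d = m + d := by rw [hd_def]; ring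
    have hδd : δ ≤ d := min_le_right _ _
    have hθd : d ≤ θ - m := by linarith
    have hθε : (-A) * (M - θ) ≤ ε := by
      have h1 : M - θ < δ := by linarith
      have h2 : δ ≤ ε / (1 - A) := min_le_left _ _
      have h4 : (-A) * (M - θ) ≤ (1 - A) * (ε / (1 - A)) :=
        mul_le_mul (by linarith) (by linarith) (by linarith) (by linarith)
      have h5 : (1 - A) * (ε / (1 - A)) = ε := by field_simp
      linarith
    rw [hIrw θ]
    refine iSup_le fun α => EReal.coe_le_coe_iff.2 ?_
    rcases le_or_gt 0 α with hα | hα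
    · have := B0 α hα θ hθM.le
      linarith
    rcases le_or_gt α A with hαA | hαA
    · have hθm : (0:ℝ) < θ - m := by linarith
      have h3 : α * (θ - m) ≤ c := by
        have hA2 : α * (θ - m) ≤ A * (θ - m) := mul_le_mul_of_nonneg_right hαA hθm.le
        rcases le_or_gt c 0 with hc | hc
        · have hAcd : A ≤ c / d := min_le_left _ _
          have h5 : A * (θ - m) ≤ (c / d) * (θ - m) := mul_le_mul_of_nonneg_right hAcd hθm.le
          have hcd0 : c / d ≤ 0 := div_nonpos_of_nonpos_of_nonneg hc hd.le
          have h6 : (c / d) * (θ - m) ≤ (c / d) * d := mul_le_mul_of_nonpos_left hθd hcd0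
          have h7 : (c / d) * d = c := div_mul_cancel₀ c hd.ne'
          linarith
        · nlinarith
      have h8 := B1 α θ
      have h9 : c - Real.log q = L + ε := by rw [hc_def]; ring
      linarith
    · have h7 : α * (θ - M) ≤ (-A) * (M - θ) := by nlinarith
      have h8 := h_nlog_le α
      linarith
  -- lower eventual bound
  have hLB : ∀ ε : ℝ, 0 < ε →
      ∀ᶠ θ in nhdsWithin M (Set.Iio M), ((L - ε : ℝ) : EReal) ≤ I θ := by
    intro ε hε
    obtain ⟨α₀, hα₀⟩ : ∃ α₀ : ℝ, L - ε / 2 < -Real.log (f α₀) :=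
      (h_nlog.eventually (eventually_gt_nhds (show L - ε / 2 < L by linarith))).exists
    have hδpos : (0:ℝ) < ε / 2 / (1 + |α₀|) := by positivity
    filter_upwards [eventually_nhdsWithin_of_eventually_nhds
      (eventually_gt_nhds (show M - ε / 2 / (1 + |α₀|) < M by linarith)),
      eventually_mem_nhdsWithin] with θ hθ1 hθ2
    have hθM : θ < M := hθ2
    have hbound : -(ε / 2) ≤ α₀ * (θ - M) := by
      have habs : |θ - M| = M - θ := by rw [abs_of_neg (by linarith : θ - M < 0)]; ring
      have h1 : |α₀ * (θ - M)| = |α₀| * (M - θ) := by rw [abs_mul, habs]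
      have h3 : M - θ < ε / 2 / (1 + |α₀|) := by linarith
      have h4 : |α₀| * (M - θ) ≤ (1 + |α₀|) * (ε / 2 / (1 + |α₀|)) :=
        mul_le_mul (by linarith [abs_nonneg α₀]) h3.le (by linarith) (by positivity)
      have h5 : (1 + |α₀|) * (ε / 2 / (1 + |α₀|)) = ε / 2 := by
        rw [mul_comm]
        exact div_mul_cancel₀ _ (by positivity)
      have h6 := neg_abs_le (α₀ * (θ - M))
      rw [h1] at h6
      linarith
    rw [hIrw θ]
    refine le_trans ?_ (le_iSup (fun α : ℝ => ((α * (θ - M) - Real.log (f α) : ℝ) : EReal)) α₀)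
    exact EReal.coe_le_coe_iff.2 (by linarith)
  have key2 : Tendsto I (nhdsWithin M (Set.Iio M)) (nhds ((L : ℝ) : EReal)) := by
    refine tendsto_order.2 ⟨?_, ?_⟩
    · intro a ha
      obtain ⟨x, hax, hxL⟩ := EReal.lt_iff_exists_real_btwn.1 ha
      have hε : (0:ℝ) < L - x := sub_pos.2 (EReal.coe_lt_coe_iff.1 hxL)
      filter_upwards [hLB _ hε] with θ hθ
      refine lt_of_lt_of_le hax (le_trans ?_ hθ)
      exact EReal.coe_le_coe_iff.2 (by linarith)
    · intro b hb
      obtain ⟨x, hLx, hxb⟩ := EReal.lt_iff_exists_real_btwn.1 hb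
      have hε : (0:ℝ) < (x - L) / 2 := by
        have := EReal.coe_lt_coe_iff.1 hLx
        linarith
      filter_upwards [hUB _ hε] with θ hθ
      refine lt_of_le_of_lt hθ (lt_trans ?_ hxb)
      refine EReal.coe_lt_coe_iff.2 ?_
      have := EReal.coe_lt_coe_iff.1 hLx
      linarith
  exact ⟨key1, key2, key3⟩
end

section
/- Fluctuation relation: let P be a faithful probability measure on a finite set Ω and Θ : Ω → Ω a bijection with Θ∘Θ = id. Set P_Θ(ω) = P(Θ(ω)) and σ(ω) = log(P(ω)/P_Θ(ω)). Let Q(s) = P{ω : σ(ω) = s} be the distribution of σ under P. Then Q(−s) = e^{−s} Q(s) for all s ∈ ℝ. -/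
open scoped BigOperators
open Classical in
/-- Fluctuation relation: for a faithful probability measure `P` on a finite
set and an involution `Θ`, with `σ(ω) = log(P(ω)/P(Θ(ω)))` and
`Q(s) = P{σ = s}`, one has `Q(−s) = e^{−s} Q(s)` for all `s`. -/
theorem fluctuation_relation {Ω : Type*} [Fintype Ω] (P : Ω → ℝ) (Θ : Ω → Ω)
    (hP0 : ∀ ω, 0 < P ω) (hP1 : ∑ ω, P ω = 1)
    (hΘ : ∀ ω, Θ (Θ ω) = ω) (s : ℝ) :
    (∑ ω, if Real.log (P ω / P (Θ ω)) = -s then P ω else 0)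
      = Real.exp (-s) * ∑ ω, if Real.log (P ω / P (Θ ω)) = s then P ω else 0 := by
  have hinv : Function.Involutive Θ := hΘ
  have e := hinv.toPerm
  rw [← Equiv.sum_comp hinv.toPerm
    (fun ω => if Real.log (P ω / P (Θ ω)) = -s then P ω else 0), Finset.mul_sum]
  apply Finset.sum_congr rfl
  intro ω _
  simp only [Function.Involutive.coe_toPerm, hΘ]
  have hlog : Real.log (P (Θ ω) / P ω) = - Real.log (P ω / P (Θ ω)) := by
    rw [← Real.log_inv, inv_div]
  by_cases h : Real.log (P ω / P (Θ ω)) = s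
  · rw [if_pos (by rw [hlog, h]), if_pos h]
    have : P ω / P (Θ ω) = Real.exp s := by
      rw [← h, Real.exp_log (div_pos (hP0 ω) (hP0 (Θ ω)))]
    rw [Real.exp_neg, ← this]
    field_simp [ne_of_gt (hP0 ω)]
  · rw [if_neg (by rw [hlog]; intro hc; exact h (by linarith [neg_eq_iff_eq_neg.mp hc] )),
      if_neg h, mul_zero]
end
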